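/- arXiv:2506.01235 — 2 statements merged into one kernel-verified Lean document; each statement's English description precedes it below -/
import Mathlib

section
/- Every element g ∈ Γ_d can be expressed uniquely in the normal form g = t^r a_1^{p_1} a_2^{p_2} ⋯ a_d^{p_d} with r, p_1, …, p_d ∈ ℤ; moreover, if d(1,g) ≤ n then |r| ≤ n and |p_i| ≤ n^i for i = 1, …, d. -/
namespace ModelFiliform

/-- The "down-shift" endomorphism `N` of `ℤ^d`: `(N x) j = x (j-1)` for `j ≥ 1`, `(N x) 0 = 0`.
The automorphism `φ` of the model filiform group is `1 + N`. -/
def shiftMap (d : ℕ) : (Fin d → ℤ) →ₗ[ℤ] (Fin d → ℤ) where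
  toFun x := fun j =>
    if _h : 1 ≤ (j : ℕ) then x ⟨(j : ℕ) - 1, lt_of_le_of_lt (Nat.sub_le _ _) j.isLt⟩ else 0
  map_add' x y := by funext j; by_cases h : 1 ≤ (j : ℕ) <;> simp [h]
  map_smul' c x := by funext j; by_cases h : 1 ≤ (j : ℕ) <;> simp [h]

theorem shiftMap_apply (d : ℕ) (x : Fin d → ℤ) (j : Fin d) :
    shiftMap d x j =
      if _h : 1 ≤ (j : ℕ) then x ⟨(j : ℕ) - 1, lt_of_le_of_lt (Nat.sub_le _ _) j.isLt⟩ else 0 :=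
  rfl

theorem shiftMap_pow_apply (d k : ℕ) (x : Fin d → ℤ) (j : Fin d) :
    ((shiftMap d ^ k) x) j =
      if _h : k ≤ (j : ℕ) then x ⟨(j : ℕ) - k, lt_of_le_of_lt (Nat.sub_le _ _) j.isLt⟩
      else 0 := by
  induction k generalizing x with
  | zero => simp
  | succ k ih =>
      rw [pow_succ, Module.End.mul_apply, ih]
      by_cases h1 : k ≤ (j : ℕ)
      · rw [dif_pos h1, shiftMap_apply]
        by_cases h2 : k + 1 ≤ (j : ℕ)
        · rw [dif_pos (show 1 ≤ (j : ℕ) - k by omega), dif_pos h2]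
          have hab : (j : ℕ) - k - 1 = (j : ℕ) - (k + 1) := by omega
          simp only [hab]
        · rw [dif_neg (show ¬ 1 ≤ (j : ℕ) - k by omega), dif_neg h2]
      · rw [dif_neg h1, dif_neg (by omega)]

theorem shiftMap_nilpotent (d : ℕ) : IsNilpotent (shiftMap d) := by
  refine ⟨d, ?_⟩
  apply LinearMap.ext
  intro x
  funext j
  rw [shiftMap_pow_apply, dif_neg (by omega)]
  rfl

/-- `φ = 1 + N` as a unit of the endomorphism ring of `ℤ^d`. -/
noncomputable def phiUnit (d : ℕ) : (Module.End ℤ (Fin d → ℤ))ˣ :=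
  ((shiftMap_nilpotent d).isUnit_one_add).unit

/-- The automorphism `φ` of `ℤ^d`: writing `ℤ^d` multiplicatively with basis `a_1, …, a_d`
(where `a_{i+1}` is the `i`-th standard basis vector, `i : Fin d`), it fixes `a_d` and sends
`a_i ↦ a_i a_{i+1}` for `1 ≤ i < d`. -/
noncomputable def phi (d : ℕ) : (Fin d → ℤ) ≃ₗ[ℤ] (Fin d → ℤ) :=
  LinearMap.GeneralLinearGroup.generalLinearEquiv ℤ _ (phiUnit d)

/-- `φ` as a multiplicative automorphism of `Multiplicative ℤ^d`. -/
noncomputable def phiAut (d : ℕ) : MulAut (Multiplicative (Fin d → ℤ)) :=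
  AddEquiv.toMultiplicative (phi d).toAddEquiv

/-- The action of `ℤ` on `ℤ^d` defining `Γ_d = ℤ^d ⋊_φ ℤ`: the generator `t` acts by
`t x t⁻¹ = φ⁻¹(x)`, so that `t⁻¹ a_i t = φ(a_i)`, i.e. `t⁻¹ a_i t = a_i a_{i+1}` for
`1 ≤ i < d` and `t⁻¹ a_d t = a_d`. -/
noncomputable def act (d : ℕ) : Multiplicative ℤ →* MulAut (Multiplicative (Fin d → ℤ)) :=
  zpowersHom _ (phiAut d)⁻¹

/-- The discrete model filiform group `Γ_d = ℤ^d ⋊_φ ℤ`. -/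
abbrev Gamma (d : ℕ) : Type :=
  SemidirectProduct (Multiplicative (Fin d → ℤ)) (Multiplicative ℤ) (act d)

/-- The generator `t` of `Γ_d`. -/
noncomputable def tGen (d : ℕ) : Gamma d :=
  SemidirectProduct.inr (Multiplicative.ofAdd (1 : ℤ))

/-- The generators `a_1, …, a_d` of `Γ_d`: here `aGen d i` is `a_{i+1}` (as `i : Fin d` is
0-indexed), so `a_1 = aGen d ⟨0, _⟩` and `a_d = aGen d ⟨d-1, _⟩`. -/
noncomputable def aGen (d : ℕ) (i : Fin d) : Gamma d :=
  SemidirectProduct.inl (Multiplicative.ofAdd (Pi.single i (1 : ℤ)))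

/-- The standard generating set `{a_1, …, a_d, t}` of `Γ_d`. -/
noncomputable def gens (d : ℕ) : Set (Gamma d) := insert (tGen d) (Set.range (aGen d))

/-- The word length `d(1,g)` of `g ∈ Γ_d` with respect to the standard generators: the least
`n` such that `g` is a product of `n` elements of `{a_1^{±1}, …, a_d^{±1}, t^{±1}}`. -/
noncomputable def wl (d : ℕ) (g : Gamma d) : ℕ :=
  sInf {n | ∃ l : List (Gamma d), l.length = n ∧
    (∀ x ∈ l, x ∈ gens d ∨ x⁻¹ ∈ gens d) ∧ l.prod = g}

/-- The subgroup `A_d = ℤ^d ⋊ 1 = ⟨a_1, …, a_d⟩` of `Γ_d`. -/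
noncomputable def A (d : ℕ) : Subgroup (Gamma d) := Subgroup.closure (Set.range (aGen d))

open Multiplicative SemidirectProduct

theorem tGen_zpow (d : ℕ) (r : ℤ) : tGen d ^ r = inr (ofAdd r) := by
  rw [tGen, ← map_zpow, ← ofAdd_zsmul, smul_eq_mul, mul_one]

theorem single_zsmul (d : ℕ) (i : Fin d) (p : ℤ) :
    p • (Pi.single i (1 : ℤ) : Fin d → ℤ) = Pi.single i p := by
  funext j
  by_cases h : j = i
  · subst h; simp
  · simp [Pi.single_eq_of_ne h]

theorem aGen_zpow (d : ℕ) (i : Fin d) (p : ℤ) :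
    aGen d i ^ p = inl (ofAdd (Pi.single i p)) := by
  rw [aGen, ← map_zpow, ← ofAdd_zsmul, single_zsmul]

theorem prodA (d : ℕ) (p : Fin d → ℤ) :
    (List.ofFn (fun i : Fin d => aGen d i ^ p i)).prod = inl (ofAdd p) := by
  have : (List.ofFn (fun i : Fin d => aGen d i ^ p i))
      = List.map (inl (φ := act d)) (List.ofFn (fun i => ofAdd (Pi.single i (p i)))) := by
    rw [List.map_ofFn]
    congr 1
    funext i
    simp [aGen_zpow, Function.comp]
  rw [this, ← map_list_prod, Fin.prod_ofFn]
  rw [← ofAdd_sum]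
  congr 1
  exact Finset.univ_sum_single p

theorem F_left (d : ℕ) (r : ℤ) (p : Fin d → ℤ) :
    (tGen d ^ r * (List.ofFn (fun i : Fin d => aGen d i ^ p i)).prod).left
      = act d (ofAdd r) (ofAdd p) := by
  rw [tGen_zpow, prodA]
  simp [SemidirectProduct.mul_left]

theorem F_right (d : ℕ) (r : ℤ) (p : Fin d → ℤ) :
    (tGen d ^ r * (List.ofFn (fun i : Fin d => aGen d i ^ p i)).prod).right = ofAdd r := by
  rw [tGen_zpow, prodA]
  simp [SemidirectProduct.mul_right]

noncomputable def nfR (d : ℕ) (g : Gamma d) : ℤ := toAdd g.right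

noncomputable def nfP (d : ℕ) (g : Gamma d) : Fin d → ℤ := toAdd ((act d g.right)⁻¹ g.left)

theorem phi_apply (d : ℕ) (v : Fin d → ℤ) : phi d v = v + shiftMap d v := by
  have h1 : phi d v = ((phiUnit d : Module.End ℤ (Fin d → ℤ))) v := rfl
  have h2 : ((phiUnit d : Module.End ℤ (Fin d → ℤ))) = 1 + shiftMap d :=
    (shiftMap_nilpotent d).isUnit_one_add.unit_spec
  rw [h1, h2]
  simp

theorem toAdd_phiAut (d : ℕ) (x : Multiplicative (Fin d → ℤ)) :
    toAdd (phiAut d x) = phi d (toAdd x) := rfl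

theorem nf_spec (d : ℕ) (g : Gamma d) :
    g = tGen d ^ nfR d g * (List.ofFn (fun i : Fin d => aGen d i ^ nfP d g i)).prod := by
  apply SemidirectProduct.ext
  · rw [F_left]
    simp only [nfR, nfP, ofAdd_toAdd]
    exact (MulAut.apply_inv_self _ (act d g.right) g.left).symm
  · rw [F_right]
    simp [nfR]

theorem nf_unique (d : ℕ) (g : Gamma d) (r : ℤ) (p : Fin d → ℤ)
    (h : g = tGen d ^ r * (List.ofFn (fun i : Fin d => aGen d i ^ p i)).prod) :
    r = nfR d g ∧ p = nfP d g := by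
  have hr : g.right = ofAdd r := by rw [h, F_right]
  have hl : g.left = act d (ofAdd r) (ofAdd p) := by rw [h, F_left]
  constructor
  · simp [nfR, hr]
  · simp [nfP, hr, hl]

theorem nfR_one (d : ℕ) : nfR d 1 = 0 := by simp [nfR]

theorem nfP_one (d : ℕ) : nfP d 1 = 0 := by simp [nfP]

theorem right_mul_tpow (d : ℕ) (g : Gamma d) (e : ℤ) :
    (g * tGen d ^ e).right = g.right * ofAdd e := by
  rw [tGen_zpow]; rfl

theorem left_mul_tpow (d : ℕ) (g : Gamma d) (e : ℤ) :
    (g * tGen d ^ e).left = g.left := by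
  rw [tGen_zpow]
  simp [SemidirectProduct.mul_left]

theorem nfR_mul_t (d : ℕ) (g : Gamma d) (e : ℤ) :
    nfR d (g * tGen d ^ e) = nfR d g + e := by
  simp [nfR, right_mul_tpow, tGen_zpow]

theorem nfP_mul_t (d : ℕ) (g : Gamma d) (e : ℤ) :
    nfP d (g * tGen d ^ e)
      = toAdd ((act d (ofAdd e))⁻¹ ((act d g.right)⁻¹ g.left)) := by
  simp only [nfP, right_mul_tpow, left_mul_tpow, map_mul, mul_inv_rev, MulAut.mul_apply]

theorem act_one_inv (d : ℕ) : (act d (ofAdd (1:ℤ)))⁻¹ = phiAut d := by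
  rw [act, zpowersHom_apply]
  simp

theorem act_negone_inv (d : ℕ) : (act d (ofAdd (-1:ℤ)))⁻¹ = (phiAut d)⁻¹ := by
  rw [act, zpowersHom_apply]
  simp

theorem nfP_mul_tpos (d : ℕ) (g : Gamma d) :
    nfP d (g * tGen d) = nfP d g + shiftMap d (nfP d g) := by
  have h : g * tGen d = g * tGen d ^ (1:ℤ) := by rw [zpow_one]
  rw [h, nfP_mul_t, act_one_inv, toAdd_phiAut, phi_apply]
  rfl

theorem nfP_mul_tneg (d : ℕ) (g : Gamma d) :
    nfP d (g * (tGen d)⁻¹) + shiftMap d (nfP d (g * (tGen d)⁻¹)) = nfP d g := by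
  have h : g * (tGen d)⁻¹ = g * tGen d ^ (-1:ℤ) := by rw [zpow_neg_one]
  rw [h, nfP_mul_t, act_negone_inv, ← phi_apply, ← toAdd_phiAut,
    MulAut.apply_inv_self]
  rfl

theorem nfR_mul_a (d : ℕ) (g : Gamma d) (j : Fin d) (e : ℤ) :
    nfR d (g * aGen d j ^ e) = nfR d g := by
  rw [aGen_zpow]
  simp [nfR, SemidirectProduct.mul_right]

theorem nfP_mul_a (d : ℕ) (g : Gamma d) (j : Fin d) (e : ℤ) :
    nfP d (g * aGen d j ^ e) = nfP d g + Pi.single j e := by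
  rw [aGen_zpow]
  simp only [nfP, SemidirectProduct.mul_left, SemidirectProduct.mul_right,
    SemidirectProduct.right_inl, mul_one, SemidirectProduct.left_inl, map_mul]
  rw [MulAut.inv_apply_self]
  rfl

theorem pow_arith (m k : ℕ) : m ^ (k + 1) + (m + 1) ^ k ≤ (m + 1) ^ (k + 1) := by
  have h : m ^ k ≤ (m + 1) ^ k := Nat.pow_le_pow_left (Nat.le_succ m) k
  calc m ^ (k + 1) + (m + 1) ^ k = m ^ k * m + (m + 1) ^ k := by ring
    _ ≤ (m + 1) ^ k * m + (m + 1) ^ k := by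
        exact Nat.add_le_add_right (Nat.mul_le_mul_right m h) _
    _ = (m + 1) ^ (k + 1) := by ring

theorem pow_arith1 (m k : ℕ) : m ^ (k + 1) + 1 ≤ (m + 1) ^ (k + 1) := by
  have h : m ^ k ≤ (m + 1) ^ k := Nat.pow_le_pow_left (Nat.le_succ m) k
  have h1 : 1 ≤ (m + 1) ^ k := Nat.one_le_pow _ _ (Nat.succ_pos m)
  calc m ^ (k + 1) + 1 = m ^ k * m + 1 := by ring
    _ ≤ (m + 1) ^ k * m + (m + 1) ^ k := by
        exact Nat.add_le_add (Nat.mul_le_mul_right m h) h1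
    _ = (m + 1) ^ (k + 1) := by ring

theorem step_bound_t (d m : ℕ) (p q : Fin d → ℤ)
    (hp : ∀ i : Fin d, (p i).natAbs ≤ m ^ ((i : ℕ) + 1))
    (hq : ∀ i : Fin d, q i = p i + shiftMap d p i) :
    ∀ i : Fin d, (q i).natAbs ≤ (m + 1) ^ ((i : ℕ) + 1) := by
  intro i
  have h1 := hp i
  have hL := pow_arith m (i : ℕ)
  have hq' := hq i
  rw [shiftMap_apply] at hq'
  have h4 : m ^ ((i : ℕ) + 1) ≤ (m + 1) ^ ((i : ℕ) + 1) :=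
    Nat.pow_le_pow_left (by omega) _
  by_cases h : 1 ≤ (i : ℕ)
  · rw [dif_pos h] at hq'
    set i' : Fin d := ⟨(i : ℕ) - 1, lt_of_le_of_lt (Nat.sub_le _ _) i.isLt⟩ with hi'
    have h2 := hp i'
    have h2' : ((i' : ℕ) + 1) = (i : ℕ) := by
      rw [hi']; simp; omega
    rw [h2'] at h2
    have h5 : m ^ (i : ℕ) ≤ (m + 1) ^ (i : ℕ) := Nat.pow_le_pow_left (by omega) _
    omega
  · rw [dif_neg h] at hq'
    omega

theorem step_bound_tinv (d m : ℕ) (v w : Fin d → ℤ)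
    (hw : ∀ j : Fin d, w j + shiftMap d w j = v j)
    (hv : ∀ j : Fin d, (v j).natAbs ≤ m ^ ((j : ℕ) + 1)) :
    ∀ j : Fin d, (w j).natAbs ≤ (m + 1) ^ ((j : ℕ) + 1) := by
  have key : ∀ n : ℕ, ∀ j : Fin d, (j : ℕ) ≤ n → (w j).natAbs ≤ (m + 1) ^ ((j : ℕ) + 1) := by
    intro n
    induction n with
    | zero =>
        intro j hj
        have hw' := hw j
        rw [shiftMap_apply, dif_neg (by omega)] at hw'
        have h1 := hv j
        have h4 : m ^ ((j : ℕ) + 1) ≤ (m + 1) ^ ((j : ℕ) + 1) :=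
          Nat.pow_le_pow_left (by omega) _
        omega
    | succ n ih =>
        intro j hj
        have hw' := hw j
        rw [shiftMap_apply] at hw'
        have h1 := hv j
        have h4 : m ^ ((j : ℕ) + 1) ≤ (m + 1) ^ ((j : ℕ) + 1) :=
          Nat.pow_le_pow_left (by omega) _
        by_cases h : 1 ≤ (j : ℕ)
        · rw [dif_pos h] at hw'
          set j' : Fin d := ⟨(j : ℕ) - 1, lt_of_le_of_lt (Nat.sub_le _ _) j.isLt⟩ with hj'
          have h2 := ih j' (by rw [hj']; simp; omega)
          have h2' : ((j' : ℕ) + 1) = (j : ℕ) := by rw [hj']; simp; omega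
          rw [h2'] at h2
          have hL := pow_arith m (j : ℕ)
          omega
        · rw [dif_neg h] at hw'
          omega
  intro j
  exact key (j : ℕ) j le_rfl

theorem step_bound_a (d m : ℕ) (p : Fin d → ℤ) (j : Fin d) (e : ℤ) (he : e.natAbs = 1)
    (hp : ∀ i : Fin d, (p i).natAbs ≤ m ^ ((i : ℕ) + 1)) :
    ∀ i : Fin d, (((p + Pi.single j e : Fin d → ℤ)) i).natAbs ≤ (m + 1) ^ ((i : ℕ) + 1) := by
  intro i
  have h1 := hp i
  have hL := pow_arith1 m (i : ℕ)
  have h4 : m ^ ((i : ℕ) + 1) ≤ (m + 1) ^ ((i : ℕ) + 1) :=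
    Nat.pow_le_pow_left (by omega) _
  rw [Pi.add_apply]
  by_cases h : i = j
  · subst h
    rw [Pi.single_eq_same]
    omega
  · rw [Pi.single_eq_of_ne h]
    omega

theorem bound_of_list (d : ℕ) (l : List (Gamma d))
    (hl : ∀ x ∈ l, x ∈ gens d ∨ x⁻¹ ∈ gens d) :
    (nfR d l.prod).natAbs ≤ l.length ∧
      ∀ i : Fin d, (nfP d l.prod i).natAbs ≤ l.length ^ ((i : ℕ) + 1) := by
  induction l using List.reverseRecOn with
  | nil => simp [nfR_one, nfP_one]
  | append_singleton l s ih =>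
    obtain ⟨ihr, ihp⟩ := ih (fun x hx => hl x (by simp [hx]))
    have hs : s ∈ gens d ∨ s⁻¹ ∈ gens d := hl s (by simp)
    rw [List.prod_append, List.prod_singleton, List.length_append, List.length_singleton]
    have hcase : (∃ e : ℤ, e.natAbs = 1 ∧ s = tGen d ^ e) ∨
        (∃ e : ℤ, e.natAbs = 1 ∧ ∃ j, s = aGen d j ^ e) := by
      rcases hs with hs | hs <;> rw [gens, Set.mem_insert_iff, Set.mem_range] at hs
      · rcases hs with rfl | ⟨j, rfl⟩
        · exact Or.inl ⟨1, rfl, (zpow_one _).symm⟩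
        · exact Or.inr ⟨1, rfl, j, (zpow_one _).symm⟩
      · rcases hs with hs | ⟨j, hs⟩
        · refine Or.inl ⟨-1, by norm_num, ?_⟩
          rw [zpow_neg_one, ← hs, inv_inv]
        · refine Or.inr ⟨-1, by norm_num, j, ?_⟩
          rw [zpow_neg_one, hs, inv_inv]
    rcases hcase with ⟨e, he, rfl⟩ | ⟨e, he, j, rfl⟩
    · constructor
      · rw [nfR_mul_t]
        omega
      · have he' : e = 1 ∨ e = -1 := by omega
        rcases he' with rfl | rfl
        · have h1 : l.prod * tGen d ^ (1 : ℤ) = l.prod * tGen d := by rw [zpow_one]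
          rw [h1]
          exact step_bound_t d l.length (nfP d l.prod) (nfP d (l.prod * tGen d)) ihp
            (fun i => by rw [nfP_mul_tpos]; rfl)
        · have h1 : l.prod * tGen d ^ (-1 : ℤ) = l.prod * (tGen d)⁻¹ := by rw [zpow_neg_one]
          rw [h1]
          exact step_bound_tinv d l.length (nfP d l.prod) (nfP d (l.prod * (tGen d)⁻¹))
            (fun i => by
              have h := congrFun (nfP_mul_tneg d l.prod) i
              rw [Pi.add_apply] at h
              exact h) ihp
    · constructor
      · rw [nfR_mul_a]
        omega
      · have hP := nfP_mul_a d l.prod j e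
        intro i
        rw [hP]
        exact step_bound_a d l.length (nfP d l.prod) j e he ihp i

theorem exists_word (d : ℕ) (g : Gamma d) :
    ∃ l : List (Gamma d), (∀ x ∈ l, x ∈ gens d ∨ x⁻¹ ∈ gens d) ∧ l.prod = g := by
  have hmem : g ∈ Submonoid.closure (gens d ∪ (gens d)⁻¹) := by
    rw [← Subgroup.closure_toSubmonoid, Subgroup.mem_toSubmonoid]
    rw [nf_spec d g]
    refine mul_mem (zpow_mem (Subgroup.subset_closure (Set.mem_insert _ _)) _) ?_
    refine list_prod_mem ?_
    intro x hx
    rw [List.mem_ofFn] at hx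
    obtain ⟨i, rfl⟩ := hx
    exact zpow_mem (Subgroup.subset_closure (Set.mem_insert_of_mem _ (Set.mem_range_self i))) _
  obtain ⟨l, hl, rfl⟩ := Submonoid.exists_list_of_mem_closure hmem
  refine ⟨l, fun x hx => ?_, rfl⟩
  rcases Set.mem_union _ _ _ |>.mp (hl x hx) with h | h
  · exact Or.inl h
  · exact Or.inr (Set.mem_inv.mp h)
/-- Lemma 3.1:: every `g ∈ Γ_d` has a unique normal form `t^r a_1^{p_1} ⋯ a_d^{p_d}`, and if
`d(1,g) ≤ n` then `|r| ≤ n` and `|p_i| ≤ n^i` (for `i : Fin d` 0-indexed, `|p_i| ≤ n^{i+1}`). -/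
theorem normal_form_exists_unique_and_bounds (d : ℕ) (hd : 1 ≤ d) :
    (∀ g : Gamma d, ∃! rp : ℤ × (Fin d → ℤ),
      g = tGen d ^ rp.1 * (List.ofFn (fun i : Fin d => aGen d i ^ rp.2 i)).prod) ∧
    (∀ n : ℕ, ∀ g : Gamma d, wl d g ≤ n → ∀ r : ℤ, ∀ p : Fin d → ℤ,
      g = tGen d ^ r * (List.ofFn (fun i : Fin d => aGen d i ^ p i)).prod →
      r.natAbs ≤ n ∧ ∀ i : Fin d, (p i).natAbs ≤ n ^ ((i : ℕ) + 1)) := by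
  constructor
  · intro g
    refine ⟨(nfR d g, nfP d g), nf_spec d g, ?_⟩
    rintro ⟨r, p⟩ h
    obtain ⟨h1, h2⟩ := nf_unique d g r p h
    simp only [Prod.mk.injEq]
    exact ⟨h1, h2⟩
  · intro n g hwl r p hgr
    obtain ⟨h1, h2⟩ := nf_unique d g r p hgr
    have hne : {k | ∃ l : List (Gamma d), l.length = k ∧
        (∀ x ∈ l, x ∈ gens d ∨ x⁻¹ ∈ gens d) ∧ l.prod = g}.Nonempty := by
      obtain ⟨l, hgens, hprod⟩ := exists_word d g
      exact ⟨l.length, l, rfl, hgens, hprod⟩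
    have hmem := Nat.sInf_mem hne
    obtain ⟨l, hlen, hgens, hprod⟩ := hmem
    have hb := bound_of_list d l hgens
    rw [hprod] at hb
    have hlen' : l.length ≤ n := by
      rw [hlen]
      exact hwl
    obtain ⟨hbr, hbp⟩ := hb
    constructor
    · rw [h1]
      exact le_trans hbr hlen'
    · intro i
      rw [h2]
      exact le_trans (hbp i) (Nat.pow_le_pow_left hlen' _)

end ModelFiliform
end

section
/- For every integer d ≥ 1 and each i = 1, …, d, the function n ↦ d_{Γ_d}(1, a_i^n) is Lipschitz equivalent to n ↦ n^{1/i}: there exists a constant C ≥ 1 such that (1/C)·n^{1/i} ≤ d_{Γ_d}(1, a_i^n) ≤ C·n^{1/i} for all integers n ≥ 1. -/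
namespace ModelFiliform

/-! ### Auxiliary machinery -/

section AuxOps

variable (d : ℕ)

theorem phiUnit_val :
    ((phiUnit d : (Module.End ℤ (Fin d → ℤ))ˣ) : Module.End ℤ (Fin d → ℤ))
      = 1 + shiftMap d :=
  IsUnit.unit_spec _

theorem phiUnit_pow_val (k : ℕ) :
    ((phiUnit d ^ k : (Module.End ℤ (Fin d → ℤ))ˣ) : Module.End ℤ (Fin d → ℤ))
      = (1 + shiftMap d) ^ k := by
  rw [← phiUnit_val]
  exact Units.val_pow_eq_pow_val _ _

theorem onePlusN_pow_apply (k : ℕ) (x : Fin d → ℤ) :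
    ((1 + shiftMap d) ^ k) x
      = ∑ r ∈ Finset.range (k + 1), (k.choose r : ℤ) • ((shiftMap d ^ r) x) := by
  have h := (Commute.one_left (shiftMap d : Module.End ℤ (Fin d → ℤ))).add_pow k
  rw [h, LinearMap.sum_apply, ← Finset.sum_range_reflect]
  apply Finset.sum_congr rfl
  intro m hm
  simp only [Finset.mem_range] at hm
  have h1 : k + 1 - 1 - m = k - m := by omega
  have h2 : k - (k - m) = m := by omega
  rw [h1, one_pow, one_mul, Module.End.mul_apply, Module.End.natCast_apply, h2,
    Nat.choose_symm (by omega), map_nsmul]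
  simp

theorem phiPow_apply (k : ℕ) (x : Fin d → ℤ) (j : Fin d) :
    ((phiUnit d ^ k : (Module.End ℤ (Fin d → ℤ))ˣ) : Module.End ℤ (Fin d → ℤ)) x j
      = ∑ r ∈ Finset.range (k + 1), (k.choose r : ℤ) * ((shiftMap d ^ r) x j) := by
  rw [phiUnit_pow_val, onePlusN_pow_apply]
  rw [Finset.sum_apply]
  apply Finset.sum_congr rfl
  intro r _
  simp [smul_eq_mul]

theorem phi_inv_cancel (y : Fin d → ℤ) :
    ((phiUnit d : (Module.End ℤ (Fin d → ℤ))ˣ) : Module.End ℤ (Fin d → ℤ))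
      ((((phiUnit d)⁻¹ : (Module.End ℤ (Fin d → ℤ))ˣ) : Module.End ℤ (Fin d → ℤ)) y) = y := by
  have h : ((phiUnit d * (phiUnit d)⁻¹ : (Module.End ℤ (Fin d → ℤ))ˣ)
      : Module.End ℤ (Fin d → ℤ)) y = y := by
    rw [mul_inv_cancel]; rfl
  rw [Units.val_mul, Module.End.mul_apply] at h
  exact h

theorem phi_inv_rec (y : Fin d → ℤ) (j : Fin d) :
    ((((phiUnit d)⁻¹ : (Module.End ℤ (Fin d → ℤ))ˣ) : Module.End ℤ (Fin d → ℤ)) y) j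
      + shiftMap d ((((phiUnit d)⁻¹ : (Module.End ℤ (Fin d → ℤ))ˣ)
          : Module.End ℤ (Fin d → ℤ)) y) j = y j := by
  have h := phi_inv_cancel d y
  have h2 := congrFun h j
  rw [phiUnit_val] at h2
  simpa [LinearMap.add_apply] using h2

theorem phiAut_apply (x : Fin d → ℤ) :
    phiAut d (Multiplicative.ofAdd x)
      = Multiplicative.ofAdd
          (((phiUnit d : (Module.End ℤ (Fin d → ℤ))ˣ) : Module.End ℤ (Fin d → ℤ)) x) := by
  show Multiplicative.ofAdd ((phi d) x) = _
  simp [phi]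

theorem phiAut_inv_apply (y : Fin d → ℤ) :
    (phiAut d)⁻¹ (Multiplicative.ofAdd y)
      = Multiplicative.ofAdd
          ((((phiUnit d)⁻¹ : (Module.End ℤ (Fin d → ℤ))ˣ) : Module.End ℤ (Fin d → ℤ)) y) := by
  have : phiAut d (Multiplicative.ofAdd
      ((((phiUnit d)⁻¹ : (Module.End ℤ (Fin d → ℤ))ˣ) : Module.End ℤ (Fin d → ℤ)) y))
      = Multiplicative.ofAdd y := by
    rw [phiAut_apply, phi_inv_cancel]
  rw [← this]
  simp

theorem phiAut_pow_apply (k : ℕ) (x : Fin d → ℤ) :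
    (phiAut d ^ k) (Multiplicative.ofAdd x)
      = Multiplicative.ofAdd
          (((phiUnit d ^ k : (Module.End ℤ (Fin d → ℤ))ˣ) : Module.End ℤ (Fin d → ℤ)) x) := by
  induction k with
  | zero => simp
  | succ k ih =>
      rw [pow_succ', MulAut.mul_apply, ih, phiAut_apply, pow_succ', Units.val_mul,
        Module.End.mul_apply]

theorem act_ofAdd (s : ℤ) :
    act d (Multiplicative.ofAdd s) = (phiAut d)⁻¹ ^ s := by
  simp [act]

theorem act_neg_nat (k : ℕ) :
    act d (Multiplicative.ofAdd (-(k : ℤ))) = phiAut d ^ k := by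
  rw [act_ofAdd, zpow_neg, inv_zpow, inv_inv, zpow_natCast]

theorem conj_inl (k : ℕ) (x : Fin d → ℤ) :
    SemidirectProduct.inr (Multiplicative.ofAdd (-(k : ℤ)))
      * SemidirectProduct.inl (Multiplicative.ofAdd x)
      * SemidirectProduct.inr (Multiplicative.ofAdd (k : ℤ))
      = (SemidirectProduct.inl (Multiplicative.ofAdd
          (((phiUnit d ^ k : (Module.End ℤ (Fin d → ℤ))ˣ) : Module.End ℤ (Fin d → ℤ)) x))
          : Gamma d) := by
  have h := SemidirectProduct.inl_aut (φ := act d)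
    (Multiplicative.ofAdd (-(k : ℤ))) (Multiplicative.ofAdd x)
  rw [act_neg_nat, phiAut_pow_apply] at h
  have hinv : (Multiplicative.ofAdd (-(k : ℤ)))⁻¹ = Multiplicative.ofAdd (k : ℤ) := by
    simp
  rw [hinv] at h
  exact h.symm

end AuxOps


/-! ### Word length machinery -/

section WordLength

variable (d : ℕ)

/-- A list all of whose entries are generators or inverses of generators. -/
def GoodList (l : List (Gamma d)) : Prop := ∀ x ∈ l, x ∈ gens d ∨ x⁻¹ ∈ gens d

theorem wl_le_of_list {l : List (Gamma d)} (h : GoodList d l) : wl d l.prod ≤ l.length :=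
  Nat.sInf_le ⟨l, rfl, h, rfl⟩

theorem goodList_append {l₁ l₂ : List (Gamma d)} (h₁ : GoodList d l₁) (h₂ : GoodList d l₂) :
    GoodList d (l₁ ++ l₂) := by
  intro x hx
  rcases List.mem_append.mp hx with h | h
  · exact h₁ x h
  · exact h₂ x h

theorem tGen_mem_gens : tGen d ∈ gens d := Set.mem_insert _ _

theorem aGen_mem_gens (u : Fin d) : aGen d u ∈ gens d :=
  Set.mem_insert_of_mem _ ⟨u, rfl⟩

theorem exists_list_zpow {g : Gamma d} (hg : g ∈ gens d) (c : ℤ) :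
    ∃ l : List (Gamma d), GoodList d l ∧ l.prod = g ^ c ∧ l.length = c.natAbs := by
  rcases le_or_gt 0 c with hc | hc
  · refine ⟨List.replicate c.natAbs g, ?_, ?_, List.length_replicate⟩
    · intro x hx
      rw [List.eq_of_mem_replicate hx]
      exact Or.inl hg
    · rw [List.prod_replicate, ← zpow_natCast]
      congr 1
      omega
  · refine ⟨List.replicate c.natAbs g⁻¹, ?_, ?_, List.length_replicate⟩
    · intro x hx
      rw [List.eq_of_mem_replicate hx]
      exact Or.inr (by simpa using hg)
    · rw [List.prod_replicate, inv_pow, ← zpow_natCast, ← zpow_neg]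
      congr 1
      omega

theorem tGen_zpow_s8 (s : ℤ) :
    tGen d ^ s = SemidirectProduct.inr (Multiplicative.ofAdd s) := by
  rw [tGen, ← map_zpow]
  congr 1
  simp [← ofAdd_zsmul]

theorem aGen_zpow_s8 (u : Fin d) (c : ℤ) :
    aGen d u ^ c = SemidirectProduct.inl (Multiplicative.ofAdd (Pi.single u c)) := by
  rw [aGen, ← map_zpow]
  congr 1
  rw [← ofAdd_zsmul]
  congr 1
  rw [← Pi.single_smul]
  simp

theorem exists_list_single (u : Fin d) (c : ℤ) :
    ∃ l : List (Gamma d), GoodList d l ∧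
      l.prod = SemidirectProduct.inl (Multiplicative.ofAdd (Pi.single u c)) ∧
      l.length = c.natAbs := by
  rw [← aGen_zpow_s8]
  exact exists_list_zpow d (aGen_mem_gens d u) c

theorem exists_list_inl (x : Fin d → ℤ) :
    ∃ l : List (Gamma d), GoodList d l ∧
      l.prod = SemidirectProduct.inl (Multiplicative.ofAdd x) := by
  have key : ∀ s : Finset (Fin d), ∃ l : List (Gamma d), GoodList d l ∧
      l.prod = SemidirectProduct.inl (Multiplicative.ofAdd (∑ u ∈ s, Pi.single u (x u))) := by
    intro s
    induction s using Finset.induction_on with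
    | empty => exact ⟨[], by intro y hy; simp at hy, by simp⟩
    | @insert a s hns ih =>
        rcases ih with ⟨l₂, hl₂, hp₂⟩
        rcases exists_list_single d _ (x _) with ⟨l₁, hl₁, hp₁, _⟩
        refine ⟨l₁ ++ l₂, goodList_append d hl₁ hl₂, ?_⟩
        rw [List.prod_append, hp₁, hp₂, Finset.sum_insert hns, ← map_mul]
        congr 1
  rcases key Finset.univ with ⟨l, hl, hp⟩
  refine ⟨l, hl, ?_⟩
  rw [hp, Finset.univ_sum_single]

theorem wlSet_nonempty (g : Gamma d) :
    {n | ∃ l : List (Gamma d), l.length = n ∧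
      (∀ x ∈ l, x ∈ gens d ∨ x⁻¹ ∈ gens d) ∧ l.prod = g}.Nonempty := by
  rcases exists_list_inl d (Multiplicative.toAdd g.left) with ⟨l₁, hl₁, hp₁⟩
  rcases exists_list_zpow d (tGen_mem_gens d) (Multiplicative.toAdd g.right) with
    ⟨l₂, hl₂, hp₂, _⟩
  refine ⟨(l₁ ++ l₂).length, l₁ ++ l₂, rfl, goodList_append d hl₁ hl₂, ?_⟩
  rw [List.prod_append, hp₁, hp₂, tGen_zpow_s8]
  simp [SemidirectProduct.inl_left_mul_inr_right]

theorem wl_spec (g : Gamma d) :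
    ∃ l : List (Gamma d), GoodList d l ∧ l.prod = g ∧ l.length = wl d g := by
  have h := Nat.sInf_mem (wlSet_nonempty d g)
  rcases h with ⟨l, hlen, hgood, hprod⟩
  exact ⟨l, hgood, hprod, hlen⟩

theorem wl_mul_le (g h : Gamma d) : wl d (g * h) ≤ wl d g + wl d h := by
  rcases wl_spec d g with ⟨l₁, h₁, p₁, n₁⟩
  rcases wl_spec d h with ⟨l₂, h₂, p₂, n₂⟩
  have := wl_le_of_list d (goodList_append d h₁ h₂)
  rw [List.prod_append, p₁, p₂, List.length_append, n₁, n₂] at this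
  exact this

theorem wl_inv_le (g : Gamma d) : wl d g⁻¹ ≤ wl d g := by
  rcases wl_spec d g with ⟨l, hl, hp, hn⟩
  have hgood : GoodList d ((l.map (fun x => x⁻¹)).reverse) := by
    intro x hx
    rw [List.mem_reverse, List.mem_map] at hx
    rcases hx with ⟨y, hy, rfl⟩
    rcases hl y hy with h | h
    · exact Or.inr (by simpa using h)
    · exact Or.inl h
  have := wl_le_of_list d hgood
  rw [← List.prod_inv_reverse, hp] at this
  simpa [hn] using this

theorem wl_one : wl d 1 = 0 := by
  have : wl d (List.prod ([] : List (Gamma d))) ≤ 0 := wl_le_of_list d (by intro x hx; simp at hx)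
  simpa using this

theorem wl_single_le (u : Fin d) (c : ℤ) :
    wl d (SemidirectProduct.inl (Multiplicative.ofAdd (Pi.single u c))) ≤ c.natAbs := by
  rcases exists_list_single d u c with ⟨l, hl, hp, hn⟩
  have := wl_le_of_list d hl
  rw [hp, hn] at this
  exact this

theorem wl_inr_le (s : ℤ) :
    wl d (SemidirectProduct.inr (Multiplicative.ofAdd s)) ≤ s.natAbs := by
  rcases exists_list_zpow d (tGen_mem_gens d) s with ⟨l, hl, hp, hn⟩
  have := wl_le_of_list d hl
  rw [hp, tGen_zpow_s8, hn] at this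
  exact this

/-- Cost of the conjugated element `φ^k x`. -/
theorem wl_phiPow_le (k : ℕ) (x : Fin d → ℤ) :
    wl d (SemidirectProduct.inl (Multiplicative.ofAdd
        (((phiUnit d ^ k : (Module.End ℤ (Fin d → ℤ))ˣ) : Module.End ℤ (Fin d → ℤ)) x)))
      ≤ wl d (SemidirectProduct.inl (Multiplicative.ofAdd x)) + 2 * k := by
  rw [← conj_inl]
  calc wl d (SemidirectProduct.inr (Multiplicative.ofAdd (-(k : ℤ)))
        * SemidirectProduct.inl (Multiplicative.ofAdd x)
        * SemidirectProduct.inr (Multiplicative.ofAdd (k : ℤ)))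
      ≤ wl d (SemidirectProduct.inr (Multiplicative.ofAdd (-(k : ℤ)))
        * SemidirectProduct.inl (Multiplicative.ofAdd x))
        + wl d (SemidirectProduct.inr (Multiplicative.ofAdd (k : ℤ))) := wl_mul_le d _ _
    _ ≤ (wl d (SemidirectProduct.inr (Multiplicative.ofAdd (-(k : ℤ))))
        + wl d (SemidirectProduct.inl (Multiplicative.ofAdd x)))
        + wl d (SemidirectProduct.inr (Multiplicative.ofAdd (k : ℤ))) :=
        Nat.add_le_add_right (wl_mul_le d _ _) _
    _ ≤ (k + wl d (SemidirectProduct.inl (Multiplicative.ofAdd x))) + k := by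
        have h1 := wl_inr_le d (-(k : ℤ))
        have h2 := wl_inr_le d (k : ℤ)
        have e1 : (-(k : ℤ)).natAbs = k := by omega
        have e2 : ((k : ℤ)).natAbs = k := by omega
        rw [e1] at h1
        rw [e2] at h2
        omega
    _ = wl d (SemidirectProduct.inl (Multiplicative.ofAdd x)) + 2 * k := by omega

theorem wl_inl_neg_le (x : Fin d → ℤ) :
    wl d (SemidirectProduct.inl (Multiplicative.ofAdd (-x)))
      ≤ wl d (SemidirectProduct.inl (Multiplicative.ofAdd x)) := by
  have h : (SemidirectProduct.inl (Multiplicative.ofAdd (-x)) : Gamma d)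
      = (SemidirectProduct.inl (Multiplicative.ofAdd x) : Gamma d)⁻¹ := by
    rw [← map_inv]
    rfl
  rw [h]
  exact wl_inv_le d _

/-- Cost of `(φ^k - 1) x`. -/
theorem wl_delta_le (k : ℕ) (x : Fin d → ℤ) :
    wl d (SemidirectProduct.inl (Multiplicative.ofAdd
        (((phiUnit d ^ k : (Module.End ℤ (Fin d → ℤ))ˣ) : Module.End ℤ (Fin d → ℤ)) x - x)))
      ≤ 2 * wl d (SemidirectProduct.inl (Multiplicative.ofAdd x)) + 2 * k := by
  have h : (SemidirectProduct.inl (Multiplicative.ofAdd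
      (((phiUnit d ^ k : (Module.End ℤ (Fin d → ℤ))ˣ) : Module.End ℤ (Fin d → ℤ)) x - x))
      : Gamma d)
      = SemidirectProduct.inl (Multiplicative.ofAdd (-x))
        * SemidirectProduct.inl (Multiplicative.ofAdd
            (((phiUnit d ^ k : (Module.End ℤ (Fin d → ℤ))ˣ) : Module.End ℤ (Fin d → ℤ)) x)) := by
    rw [← map_mul]
    congr 1
    rw [← ofAdd_add]
    congr 1
    ring
  rw [h]
  calc wl d _ ≤ wl d (SemidirectProduct.inl (Multiplicative.ofAdd (-x)))
        + wl d (SemidirectProduct.inl (Multiplicative.ofAdd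
            (((phiUnit d ^ k : (Module.End ℤ (Fin d → ℤ))ˣ) : Module.End ℤ (Fin d → ℤ)) x))) :=
        wl_mul_le d _ _
    _ ≤ wl d (SemidirectProduct.inl (Multiplicative.ofAdd x))
        + (wl d (SemidirectProduct.inl (Multiplicative.ofAdd x)) + 2 * k) :=
        Nat.add_le_add (wl_inl_neg_le d x) (wl_phiPow_le d k x)
    _ = 2 * wl d (SemidirectProduct.inl (Multiplicative.ofAdd x)) + 2 * k := by omega

/-- Splitting the cost of `inl x` coordinatewise. -/
theorem wl_inl_le_sum (x : Fin d → ℤ) :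
    wl d (SemidirectProduct.inl (Multiplicative.ofAdd x))
      ≤ ∑ u : Fin d, wl d (SemidirectProduct.inl (Multiplicative.ofAdd (Pi.single u (x u)))) := by
  have key : ∀ s : Finset (Fin d),
      wl d (SemidirectProduct.inl (Multiplicative.ofAdd (∑ u ∈ s, Pi.single u (x u))))
        ≤ ∑ u ∈ s, wl d (SemidirectProduct.inl (Multiplicative.ofAdd (Pi.single u (x u)))) := by
    intro s
    induction s using Finset.induction_on with
    | empty => simp [wl_one]
    | @insert a s hns ih =>
        rw [Finset.sum_insert hns, Finset.sum_insert hns]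
        have heq : (SemidirectProduct.inl (Multiplicative.ofAdd
            (Pi.single a (x a) + ∑ u ∈ s, Pi.single u (x u))) : Gamma d)
            = SemidirectProduct.inl (Multiplicative.ofAdd (Pi.single a (x a)))
              * SemidirectProduct.inl (Multiplicative.ofAdd (∑ u ∈ s, Pi.single u (x u))) := by
          rw [← map_mul]
          rfl
        rw [heq]
        exact le_trans (wl_mul_le d _ _) (Nat.add_le_add_left ih _)
  have h := key Finset.univ
  rw [Finset.univ_sum_single] at h
  exact h

end WordLength


/-! ### Upper bound machinery -/

section UpperBound

theorem choose_le_pow (m r : ℕ) : m.choose r ≤ m ^ r := by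
  induction r with
  | zero => simp
  | succ r ih =>
      have h := Nat.choose_succ_right_eq m r
      have h1 : m.choose (r + 1) ≤ m.choose (r + 1) * (r + 1) :=
        Nat.le_mul_of_pos_right _ (by omega)
      calc m.choose (r + 1) ≤ m.choose (r + 1) * (r + 1) := h1
        _ = m.choose r * (m - r) := h
        _ ≤ m ^ r * m := Nat.mul_le_mul ih (by omega)
        _ = m ^ (r + 1) := (pow_succ m r).symm

theorem delta_apply (d m : ℕ) (x : Fin d → ℤ) (u : Fin d) :
    ((phiUnit d ^ m : (Module.End ℤ (Fin d → ℤ))ˣ) : Module.End ℤ (Fin d → ℤ)) x u - x u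
      = ∑ r ∈ Finset.Ico 1 (m + 1), (m.choose r : ℤ) * ((shiftMap d ^ r) x u) := by
  rw [phiPow_apply, Finset.range_eq_Ico, Finset.sum_eq_sum_Ico_succ_bot (by omega)]
  simp only [Nat.choose_zero_right, Nat.cast_one, one_mul, pow_zero, Module.End.one_apply]
  ring

/-- The iterated commutator vectors: `v 0 = q e₀`, `v (a+1) = (φ^m - 1) (v a)`. -/
noncomputable def vIter (d : ℕ) (h0 : 0 < d) (m : ℕ) (q : ℤ) : ℕ → (Fin d → ℤ)
  | 0 => Pi.single (⟨0, h0⟩ : Fin d) q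
  | a + 1 =>
      ((phiUnit d ^ m : (Module.End ℤ (Fin d → ℤ))ˣ) : Module.End ℤ (Fin d → ℤ))
        (vIter d h0 m q a) - vIter d h0 m q a

theorem vIter_succ_apply (d : ℕ) (h0 : 0 < d) (m : ℕ) (q : ℤ) (a : ℕ) (u : Fin d) :
    vIter d h0 m q (a + 1) u = ∑ r ∈ Finset.Ico 1 (m + 1),
      (m.choose r : ℤ) * ((shiftMap d ^ r) (vIter d h0 m q a) u) := by
  simp only [vIter]
  rw [Pi.sub_apply]
  exact delta_apply d m _ u

theorem natAbs_sum_le {ι : Type*} (s : Finset ι) (f : ι → ℤ) :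
    (∑ i ∈ s, f i).natAbs ≤ ∑ i ∈ s, (f i).natAbs := by
  classical
  induction s using Finset.induction_on with
  | empty => simp
  | @insert a s ha ih =>
      rw [Finset.sum_insert ha, Finset.sum_insert ha]
      exact le_trans (Int.natAbs_add_le _ _) (by omega)

theorem wl_vIter_le (d : ℕ) (h0 : 0 < d) (m : ℕ) (q : ℤ) (a : ℕ) :
    wl d (SemidirectProduct.inl (Multiplicative.ofAdd (vIter d h0 m q a))) + 2 * m
      ≤ 2 ^ a * q.natAbs + 2 ^ (a + 1) * m := by
  induction a with
  | zero =>
      have h := wl_single_le d (⟨0, h0⟩ : Fin d) q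
      have e : vIter d h0 m q 0 = Pi.single (⟨0, h0⟩ : Fin d) q := rfl
      rw [e]
      calc wl d (SemidirectProduct.inl (Multiplicative.ofAdd
              (Pi.single (⟨0, h0⟩ : Fin d) q))) + 2 * m
          ≤ q.natAbs + 2 * m := by omega
        _ ≤ 2 ^ 0 * q.natAbs + 2 ^ (0 + 1) * m := by norm_num
  | succ a ih =>
      have h := wl_delta_le d m (vIter d h0 m q a)
      have he : (SemidirectProduct.inl (Multiplicative.ofAdd (vIter d h0 m q (a + 1)))
          : Gamma d) = SemidirectProduct.inl (Multiplicative.ofAdd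
            (((phiUnit d ^ m : (Module.End ℤ (Fin d → ℤ))ˣ) : Module.End ℤ (Fin d → ℤ))
              (vIter d h0 m q a) - vIter d h0 m q a)) := rfl
      rw [he]
      calc wl d (SemidirectProduct.inl (Multiplicative.ofAdd
              (((phiUnit d ^ m : (Module.End ℤ (Fin d → ℤ))ˣ) : Module.End ℤ (Fin d → ℤ))
                (vIter d h0 m q a) - vIter d h0 m q a))) + 2 * m
          ≤ 2 * (wl d (SemidirectProduct.inl (Multiplicative.ofAdd (vIter d h0 m q a)))
              + 2 * m) := by omega
        _ ≤ 2 * (2 ^ a * q.natAbs + 2 ^ (a + 1) * m) := Nat.mul_le_mul_left _ ih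
        _ = 2 ^ (a + 1) * q.natAbs + 2 ^ (a + 1 + 1) * m := by ring
  
theorem vIter_coord (d : ℕ) (h0 : 0 < d) (m : ℕ) (hm : 1 ≤ m) (q : ℤ) (a : ℕ) :
    ∀ u : Fin d,
      ((u : ℕ) < a → vIter d h0 m q a u = 0) ∧
      ((u : ℕ) = a → vIter d h0 m q a u = q * (m : ℤ) ^ a) ∧
      (a < (u : ℕ) → (vIter d h0 m q a u).natAbs
          ≤ q.natAbs * (d + 1) ^ a * m ^ (u : ℕ)) := by
  induction a with
  | zero =>
      intro u
      refine ⟨by omega, ?_, ?_⟩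
      · intro hu
        have : u = ⟨0, h0⟩ := by
          ext
          simpa using hu
        rw [this]
        simp [vIter]
      · intro hu
        have hne : u ≠ ⟨0, h0⟩ := by
          intro h
          rw [h] at hu
          simp at hu
        show ((Pi.single (⟨0, h0⟩ : Fin d) q : Fin d → ℤ) u).natAbs ≤ _
        rw [Pi.single_eq_of_ne hne]
        simp
  | succ a ih =>
      intro u
      refine ⟨?_, ?_, ?_⟩
      · -- u < a+1 : coordinate vanishes
        intro hu
        rw [vIter_succ_apply]
        apply Finset.sum_eq_zero
        intro r hr
        simp only [Finset.mem_Ico] at hr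
        rw [shiftMap_pow_apply]
        by_cases h1 : r ≤ (u : ℕ)
        · rw [dif_pos h1]
          rw [(ih ⟨(u : ℕ) - r, lt_of_le_of_lt (Nat.sub_le _ _) u.isLt⟩).1 (by simp; omega)]
          ring
        · rw [dif_neg h1]
          ring
      · -- u = a+1 : leading coordinate
        intro hu
        rw [vIter_succ_apply]
        rw [Finset.sum_eq_sum_Ico_succ_bot (by omega : 1 < m + 1)]
        have hrest : ∑ r ∈ Finset.Ico (1 + 1) (m + 1),
            (m.choose r : ℤ) * ((shiftMap d ^ r) (vIter d h0 m q a) u) = 0 := by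
          apply Finset.sum_eq_zero
          intro r hr
          simp only [Finset.mem_Ico] at hr
          rw [shiftMap_pow_apply]
          by_cases h1 : r ≤ (u : ℕ)
          · rw [dif_pos h1]
            rw [(ih ⟨(u : ℕ) - r, lt_of_le_of_lt (Nat.sub_le _ _) u.isLt⟩).1 (by simp; omega)]
            ring
          · rw [dif_neg h1]
            ring
        rw [hrest, add_zero]
        rw [shiftMap_pow_apply]
        rw [dif_pos (by omega : 1 ≤ (u : ℕ))]
        rw [(ih ⟨(u : ℕ) - 1, lt_of_le_of_lt (Nat.sub_le _ _) u.isLt⟩).2.1 (by simp; omega)]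
        simp only [Nat.choose_one_right]
        push_cast
        ring
      · -- u > a+1 : junk estimate
        intro hu
        rw [vIter_succ_apply]
        have hterm : ∀ r ∈ Finset.Ico 1 (m + 1),
            ((m.choose r : ℤ) * ((shiftMap d ^ r) (vIter d h0 m q a) u)).natAbs
              ≤ if r ≤ (u : ℕ) - a then q.natAbs * (d + 1) ^ a * m ^ (u : ℕ) else 0 := by
          intro r hr
          simp only [Finset.mem_Ico] at hr
          rw [Int.natAbs_mul, shiftMap_pow_apply]
          by_cases h1 : r ≤ (u : ℕ)
          · rw [dif_pos h1]
            rcases lt_trichotomy ((u : ℕ) - r) a with hlt | heq | hgt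
            · rw [(ih ⟨(u : ℕ) - r, lt_of_le_of_lt (Nat.sub_le _ _) u.isLt⟩).1 (by simp; omega)]
              simp only [Int.natAbs_zero, Nat.mul_zero]
              split <;> omega
            · have hcond : r ≤ (u : ℕ) - a := by omega
              rw [if_pos hcond]
              rw [(ih ⟨(u : ℕ) - r, lt_of_le_of_lt (Nat.sub_le _ _) u.isLt⟩).2.1 (by simpa using heq)]
              have hb1 : ((m.choose r : ℤ)).natAbs = m.choose r := Int.natAbs_natCast _
              have hb2 : (q * (m : ℤ) ^ a).natAbs = q.natAbs * m ^ a := by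
                rw [Int.natAbs_mul]
                congr 1
              rw [hb1, hb2]
              have hra : r + a = (u : ℕ) := by omega
              calc m.choose r * (q.natAbs * m ^ a)
                  ≤ m ^ r * (q.natAbs * m ^ a) :=
                    Nat.mul_le_mul_right _ (choose_le_pow m r)
                _ = q.natAbs * 1 * m ^ ((u : ℕ)) := by
                    rw [← hra, pow_add]
                    ring
                _ ≤ q.natAbs * (d + 1) ^ a * m ^ ((u : ℕ)) := by
                    have : (1 : ℕ) ≤ (d + 1) ^ a := Nat.one_le_pow _ _ (by omega)
                    exact Nat.mul_le_mul_right _ (Nat.mul_le_mul_left _ this)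
            · have hcond : r ≤ (u : ℕ) - a := by omega
              rw [if_pos hcond]
              have hb := (ih ⟨(u : ℕ) - r, lt_of_le_of_lt (Nat.sub_le _ _) u.isLt⟩).2.2
                (by simpa using hgt)
              have hb1 : ((m.choose r : ℤ)).natAbs = m.choose r := Int.natAbs_natCast _
              rw [hb1]
              calc m.choose r * ((vIter d h0 m q a) ⟨(u : ℕ) - r, _⟩).natAbs
                  ≤ m ^ r * (q.natAbs * (d + 1) ^ a * m ^ ((u : ℕ) - r)) :=
                    Nat.mul_le_mul (choose_le_pow m r) hb
                _ = q.natAbs * (d + 1) ^ a * (m ^ r * m ^ ((u : ℕ) - r)) := by ring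
                _ = q.natAbs * (d + 1) ^ a * m ^ ((u : ℕ)) := by
                    rw [← pow_add]
                    congr 2
                    omega
          · rw [dif_neg h1]
            simp only [Int.natAbs_zero, Nat.mul_zero]
            split <;> omega
        calc (∑ r ∈ Finset.Ico 1 (m + 1),
              (m.choose r : ℤ) * ((shiftMap d ^ r) (vIter d h0 m q a) u)).natAbs
            ≤ ∑ r ∈ Finset.Ico 1 (m + 1),
              ((m.choose r : ℤ) * ((shiftMap d ^ r) (vIter d h0 m q a) u)).natAbs :=
              natAbs_sum_le _ _
          _ ≤ ∑ r ∈ Finset.Ico 1 (m + 1),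
              (if r ≤ (u : ℕ) - a then q.natAbs * (d + 1) ^ a * m ^ (u : ℕ) else 0) :=
              Finset.sum_le_sum hterm
          _ = ((Finset.Ico 1 (m + 1)).filter (fun r => r ≤ (u : ℕ) - a)).card
                * (q.natAbs * (d + 1) ^ a * m ^ (u : ℕ)) := by
              rw [← Finset.sum_filter, Finset.sum_const, smul_eq_mul]
          _ ≤ d * (q.natAbs * (d + 1) ^ a * m ^ (u : ℕ)) := by
              have hsub : (Finset.Ico 1 (m + 1)).filter (fun r => r ≤ (u : ℕ) - a)
                  ⊆ Finset.Ico 1 ((u : ℕ) - a + 1) := by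
                intro r hr
                simp only [Finset.mem_filter, Finset.mem_Ico] at hr ⊢
                omega
              have hcard := Finset.card_le_card hsub
              rw [Nat.card_Ico] at hcard
              have hud : (u : ℕ) < d := u.isLt
              have hcd : ((Finset.Ico 1 (m + 1)).filter (fun r => r ≤ (u : ℕ) - a)).card
                  ≤ d := by omega
              exact Nat.mul_le_mul_right _ hcd
          _ ≤ q.natAbs * (d + 1) ^ (a + 1) * m ^ (u : ℕ) := by
              have : d * (d + 1) ^ a ≤ (d + 1) ^ (a + 1) := by
                rw [pow_succ']
                exact Nat.mul_le_mul_right _ (by omega)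
              calc d * (q.natAbs * (d + 1) ^ a * m ^ (u : ℕ))
                  = q.natAbs * (d * (d + 1) ^ a) * m ^ (u : ℕ) := by ring
                _ ≤ q.natAbs * (d + 1) ^ (a + 1) * m ^ (u : ℕ) := by
                    exact Nat.mul_le_mul_right _ (Nat.mul_le_mul_left _ this)

end UpperBound


section UBInduction

/-- The inductive upper-bound statement: all coordinates of index `≥ j` are short. -/
def UB (d j : ℕ) : Prop :=
  ∀ B : ℕ, 1 ≤ B → ∃ K : ℕ, 1 ≤ K ∧ ∀ u : Fin d, j ≤ (u : ℕ) → ∀ m : ℕ, 1 ≤ m →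
    ∀ c : ℤ, c.natAbs ≤ B * m ^ ((u : ℕ) + 1) →
      wl d (SemidirectProduct.inl (Multiplicative.ofAdd (Pi.single u c))) ≤ K * m

theorem ub_top (d j : ℕ) (hj : d ≤ j) : UB d j := by
  intro B _
  refine ⟨1, le_refl 1, ?_⟩
  intro u hu
  have := u.isLt
  exact absurd hu (by omega)

theorem ub_step (d j : ℕ) (hUB : UB d (j + 1)) : UB d j := by
  intro B hB
  have hA1 : (1 : ℕ) ≤ (d + 1) ^ d := Nat.one_le_pow _ _ (by omega)
  obtain ⟨K', hK'1, hK'⟩ := hUB ((B + 1) * (d + 1) ^ d + B) (by omega)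
  set X := 2 ^ d * (B + 1) + 2 ^ (d + 1) + d * K' with hX
  set K := 4 * X + B * (2 ^ (j + 2)) ^ (j + 1) + K' with hK
  have h2d1 : (1 : ℕ) ≤ 2 ^ d := Nat.one_le_two_pow
  have hXB : B + 1 ≤ 2 ^ d * (B + 1) := Nat.le_mul_of_pos_left _ (by omega)
  refine ⟨K, by omega, ?_⟩
  intro u hu
  rcases Nat.lt_or_ge j (u : ℕ) with hju | hju
  · -- the case `u ≥ j + 1` follows directly from the inductive hypothesis
    intro m hm c hc
    have hc' : c.natAbs ≤ ((B + 1) * (d + 1) ^ d + B) * m ^ ((u : ℕ) + 1) :=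
      le_trans hc (Nat.mul_le_mul_right _ (Nat.le_add_left B _))
    have h := hK' u hju m hm c hc'
    have h2 : K' * m ≤ K * m := Nat.mul_le_mul_right _ (by omega)
    omega
  · -- the case `u = j`
    have huj : (u : ℕ) = j := le_antisymm hju hu
    have hjd : j < d := huj ▸ u.isLt
    intro m
    induction m using Nat.strong_induction_on with
    | _ m IH =>
    intro hm c hc
    rw [huj] at hc
    by_cases hj0 : j = 0
    · -- degenerate case `j = 0`
      have h1 := wl_single_le d u c
      rw [hj0] at hc
      rw [pow_one] at hc
      have h3 : B * m ≤ K * m := Nat.mul_le_mul_right _ (by omega)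
      omega
    by_cases hsmall : m ≤ 2 ^ (j + 2)
    · -- small values of `m`: use the trivial representation
      have h1 := wl_single_le d u c
      have h4 : m ^ j ≤ (2 ^ (j + 2)) ^ (j + 1) :=
        le_trans (Nat.pow_le_pow_left hsmall j)
          (Nat.pow_le_pow_right (by omega) (by omega))
      have h5 : B * m ^ (j + 1) ≤ B * (2 ^ (j + 2)) ^ (j + 1) * m := by
        calc B * m ^ (j + 1) = B * m ^ j * m := by rw [pow_succ]; ring
          _ ≤ B * (2 ^ (j + 2)) ^ (j + 1) * m :=
            Nat.mul_le_mul_right _ (Nat.mul_le_mul_left _ h4)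
      have h6 : B * (2 ^ (j + 2)) ^ (j + 1) * m ≤ K * m :=
        Nat.mul_le_mul_right _ (by omega)
      omega
    · -- main case
      push_neg at hsmall
      have hj1 : 1 ≤ j := by omega
      have h0d : 0 < d := u.pos
      have h8m : (8 : ℕ) ≤ 2 ^ (j + 2) := by
        calc (8 : ℕ) = 2 ^ 3 := by norm_num
          _ ≤ 2 ^ (j + 2) := Nat.pow_le_pow_right (by omega) (by omega)
      have hmZ : (0 : ℤ) < (m : ℤ) ^ j := by positivity
      set q : ℤ := c / (m : ℤ) ^ j with hq
      set s : ℤ := c % (m : ℤ) ^ j with hs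
      have hcs : c = (m : ℤ) ^ j * q + s := (Int.mul_ediv_add_emod c ((m : ℤ) ^ j)).symm
      have hs0 : (0 : ℤ) ≤ s := Int.emod_nonneg c (ne_of_gt hmZ)
      have hslt : s < (m : ℤ) ^ j := Int.emod_lt_of_pos c hmZ
      have hMq : (m : ℤ) ^ j * q = c - s := by omega
      have hcast : ((m ^ j : ℕ) : ℤ) = (m : ℤ) ^ j := by push_cast; ring
      have hsn : s.natAbs ≤ m ^ j := by omega
      have hqn : q.natAbs ≤ (B + 1) * m := by
        have e0 : ((m : ℤ) ^ j * q).natAbs = (c - s).natAbs := by rw [hMq]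
        have e1 : ((m : ℤ) ^ j * q).natAbs = m ^ j * q.natAbs := by
          rw [Int.natAbs_mul, Int.natAbs_pow, Int.natAbs_natCast]
        have e2 : (c - s).natAbs ≤ c.natAbs + s.natAbs := Int.natAbs_sub_le c s
        have eB : B * m + 1 ≤ (B + 1) * m := by
          have : (B + 1) * m = B * m + m := by ring
          omega
        have e3 : m ^ j * q.natAbs ≤ m ^ j * ((B + 1) * m) := by
          calc m ^ j * q.natAbs = (c - s).natAbs := by rw [← e1, e0]
            _ ≤ c.natAbs + s.natAbs := e2
            _ ≤ B * m ^ (j + 1) + m ^ j := by omega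
            _ = m ^ j * (B * m) + m ^ j * 1 := by rw [pow_succ]; ring
            _ = m ^ j * (B * m + 1) := by ring
            _ ≤ m ^ j * ((B + 1) * m) := Nat.mul_le_mul_left _ eB
        exact Nat.le_of_mul_le_mul_left e3 (pow_pos (by omega) _)
      -- the commutator vector
      have hcost := wl_vIter_le d h0d m q j
      have hcoord := vIter_coord d h0d m (by omega) q j
      set z : Fin d → ℤ := Pi.single u c - vIter d h0d m q j with hz
      have hdec : (SemidirectProduct.inl (Multiplicative.ofAdd (Pi.single u c)) : Gamma d)
          = SemidirectProduct.inl (Multiplicative.ofAdd (vIter d h0d m q j))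
            * SemidirectProduct.inl (Multiplicative.ofAdd z) := by
        rw [← map_mul]
        congr 1
        rw [← ofAdd_add]
        congr 1
        rw [hz]
        ring
      have hzu : z u = s := by
        have h1 : z u = c - vIter d h0d m q j u := by
          rw [hz, Pi.sub_apply, Pi.single_eq_same]
        rw [h1, (hcoord u).2.1 huj, hcs]
        push_cast
        ring
      have hzlow : ∀ u' : Fin d, (u' : ℕ) < j → z u' = 0 := by
        intro u' h
        have hne : u' ≠ u := by
          intro he
          rw [he] at h
          omega
        rw [hz, Pi.sub_apply, Pi.single_eq_of_ne hne, (hcoord u').1 h]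
        ring
      have hzhigh : ∀ u' : Fin d, j < (u' : ℕ) →
          (z u').natAbs ≤ ((B + 1) * (d + 1) ^ d + B) * m ^ ((u' : ℕ) + 1) := by
        intro u' h
        have hne : u' ≠ u := by
          intro he
          rw [he] at h
          omega
        have h1 : z u' = -(vIter d h0d m q j u') := by
          rw [hz, Pi.sub_apply, Pi.single_eq_of_ne hne]
          ring
        rw [h1, Int.natAbs_neg]
        calc (vIter d h0d m q j u').natAbs
            ≤ q.natAbs * (d + 1) ^ j * m ^ (u' : ℕ) := (hcoord u').2.2 h
          _ ≤ ((B + 1) * m) * (d + 1) ^ d * m ^ (u' : ℕ) :=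
              Nat.mul_le_mul (Nat.mul_le_mul hqn
                (Nat.pow_le_pow_right (by omega) (by omega))) (le_refl _)
          _ = ((B + 1) * (d + 1) ^ d) * m ^ ((u' : ℕ) + 1) := by rw [pow_succ]; ring
          _ ≤ ((B + 1) * (d + 1) ^ d + B) * m ^ ((u' : ℕ) + 1) :=
              Nat.mul_le_mul_right _ (by omega)
      -- the remainder
      set m' := m / 2 + 1 with hm'
      have hm'lt : m' < m := by omega
      have hm'1 : 1 ≤ m' := by omega
      have hsm' : s.natAbs ≤ B * m' ^ (j + 1) := by
        have h2 : m ^ j ≤ m' ^ (j + 1) := by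
          have ha : m ≤ 2 * m' := by omega
          have hb : m ^ (j + 1) ≤ (2 * m') ^ (j + 1) := Nat.pow_le_pow_left ha _
          have h2m : 2 ^ (j + 1) ≤ m := by
            have : (2 : ℕ) ^ (j + 1) ≤ 2 ^ (j + 2) := Nat.pow_le_pow_right (by omega) (by omega)
            omega
          have hc2 : 2 ^ (j + 1) * m ^ j ≤ m ^ (j + 1) := by
            calc 2 ^ (j + 1) * m ^ j ≤ m * m ^ j := Nat.mul_le_mul_right _ h2m
              _ = m ^ (j + 1) := by rw [pow_succ]; ring
          have hd2 : (2 * m') ^ (j + 1) = 2 ^ (j + 1) * m' ^ (j + 1) := by rw [mul_pow]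
          have := le_trans hc2 (le_trans hb (le_of_eq hd2))
          exact Nat.le_of_mul_le_mul_left this (pow_pos (by omega) _)
        calc s.natAbs ≤ m ^ j := hsn
          _ ≤ m' ^ (j + 1) := h2
          _ ≤ B * m' ^ (j + 1) := Nat.le_mul_of_pos_left _ (by omega)
      have hrem : wl d (SemidirectProduct.inl (Multiplicative.ofAdd (Pi.single u s)))
          ≤ K * m' := by
        have := IH m' hm'lt hm'1 s (by rw [huj]; exact hsm')
        exact this
      -- the cost of the commutator vector
      have hwlv : wl d (SemidirectProduct.inl (Multiplicative.ofAdd (vIter d h0d m q j)))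
          ≤ 2 ^ d * (B + 1) * m + 2 ^ (d + 1) * m := by
        have h2j : (2 : ℕ) ^ j ≤ 2 ^ d := Nat.pow_le_pow_right (by omega) (by omega)
        have h2j1 : (2 : ℕ) ^ (j + 1) ≤ 2 ^ (d + 1) := Nat.pow_le_pow_right (by omega) (by omega)
        have hqq : 2 ^ j * q.natAbs ≤ 2 ^ d * ((B + 1) * m) := Nat.mul_le_mul h2j hqn
        have h2 : 2 ^ (j + 1) * m ≤ 2 ^ (d + 1) * m := Nat.mul_le_mul_right _ h2j1
        have hassoc : 2 ^ d * ((B + 1) * m) = 2 ^ d * (B + 1) * m := by ring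
        omega
      -- the cost of the correction vector z
      have hsum : wl d (SemidirectProduct.inl (Multiplicative.ofAdd z))
          ≤ d * (K' * m) + K * m' := by
        have h1 := wl_inl_le_sum d z
        rw [← Finset.add_sum_erase _ _ (Finset.mem_univ u)] at h1
        have h2 : ∑ u' ∈ Finset.univ.erase u,
            wl d (SemidirectProduct.inl (Multiplicative.ofAdd (Pi.single u' (z u'))))
            ≤ (Finset.univ.erase u).card • (K' * m) := by
          apply Finset.sum_le_card_nsmul
          intro u' hu'
          rw [Finset.mem_erase] at hu'
          rcases lt_trichotomy ((u' : ℕ)) j with hlt | heq | hgt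
          · have hzz : Pi.single u' (z u') = (0 : Fin d → ℤ) := by
              rw [hzlow u' hlt, Pi.single_zero]
            rw [hzz]
            have he : (SemidirectProduct.inl (Multiplicative.ofAdd (0 : Fin d → ℤ))
                : Gamma d) = 1 := by simp
            rw [he, wl_one]
            exact Nat.zero_le _
          · exact absurd (Fin.ext (by omega : (u' : ℕ) = (u : ℕ))) hu'.1
          · exact hK' u' (by omega) m hm (z u') (hzhigh u' hgt)
        have h3 : (Finset.univ.erase u).card • (K' * m) ≤ d * (K' * m) := by
          rw [smul_eq_mul]
          have hcard : (Finset.univ.erase u).card ≤ d := by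
            rw [Finset.card_erase_of_mem (Finset.mem_univ u), Finset.card_univ,
              Fintype.card_fin]
            omega
          exact Nat.mul_le_mul_right _ hcard
        have h4 : wl d (SemidirectProduct.inl (Multiplicative.ofAdd (Pi.single u (z u))))
            ≤ K * m' := by
          rw [hzu]
          exact hrem
        omega
      -- assemble
      have hfinal : wl d (SemidirectProduct.inl (Multiplicative.ofAdd (Pi.single u c)))
          ≤ X * m + K * m' := by
        have h1 : wl d (SemidirectProduct.inl (Multiplicative.ofAdd (Pi.single u c)))
            ≤ wl d (SemidirectProduct.inl (Multiplicative.ofAdd (vIter d h0d m q j)))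
              + wl d (SemidirectProduct.inl (Multiplicative.ofAdd z)) := by
          rw [hdec]
          exact wl_mul_le d _ _
        have hXm : X * m = 2 ^ d * (B + 1) * m + 2 ^ (d + 1) * m + d * (K' * m) := by
          rw [hX]
          ring
        omega
      have h4m' : 4 * m' ≤ 3 * m := by omega
      have hXK : 4 * X ≤ K := by omega
      have hfin2 : 4 * (X * m + K * m') ≤ 4 * (K * m) := by
        calc 4 * (X * m + K * m') = (4 * X) * m + K * (4 * m') := by ring
          _ ≤ K * m + K * (3 * m) :=
            Nat.add_le_add (Nat.mul_le_mul_right _ hXK) (Nat.mul_le_mul_left _ h4m')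
          _ = 4 * (K * m) := by ring
      have : 4 * wl d (SemidirectProduct.inl (Multiplicative.ofAdd (Pi.single u c)))
          ≤ 4 * (K * m) := by omega
      omega

theorem ub_all (d : ℕ) : UB d 0 := by
  have key : ∀ r j, d ≤ j + r → UB d j := by
    intro r
    induction r with
    | zero => intro j h; exact ub_top d j (by omega)
    | succ r ih =>
        intro j h
        by_cases hjd : d ≤ j
        · exact ub_top d j hjd
        · exact ub_step d j (ih (j + 1) (by omega))
  exact key d 0 (by omega)

theorem upper_main (d : ℕ) (i : Fin d) :
    ∃ K : ℕ, 1 ≤ K ∧ ∀ m : ℕ, 1 ≤ m → ∀ c : ℤ, c.natAbs ≤ m ^ ((i : ℕ) + 1) →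
      wl d (SemidirectProduct.inl (Multiplicative.ofAdd (Pi.single i c))) ≤ K * m := by
  obtain ⟨K, hK1, hK⟩ := ub_all d 1 (le_refl 1)
  exact ⟨K, hK1, fun m hm c hc => hK i (Nat.zero_le _) m hm c (by simpa using hc)⟩

end UBInduction


section LowerBound

theorem pow_aux1 (L k : ℕ) : L ^ (k + 1) + (L + 1) ^ k ≤ (L + 1) ^ (k + 1) := by
  have h1 : L ^ (k + 1) ≤ (L + 1) ^ k * L := by
    calc L ^ (k + 1) = L ^ k * L := pow_succ L k
      _ ≤ (L + 1) ^ k * L := Nat.mul_le_mul_right _ (Nat.pow_le_pow_left (by omega) _)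
  have h2 : (L + 1) ^ (k + 1) = (L + 1) ^ k * L + (L + 1) ^ k := by rw [pow_succ]; ring
  omega

theorem pow_aux2 (L k : ℕ) : L ^ (k + 1) + L ^ k ≤ (L + 1) ^ (k + 1) := by
  have h1 : L ^ k ≤ (L + 1) ^ k := Nat.pow_le_pow_left (by omega) _
  have h2 := pow_aux1 L k
  omega

theorem pow_aux3 (L k : ℕ) : L ^ (k + 1) + 1 ≤ (L + 1) ^ (k + 1) :=
  Nat.pow_lt_pow_left (by omega) (by omega)

theorem letter_cases (d : ℕ) {x : Gamma d} (h : x ∈ gens d ∨ x⁻¹ ∈ gens d) :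
    (∃ ε : ℤ, (ε = 1 ∨ ε = -1) ∧ x = SemidirectProduct.inr (Multiplicative.ofAdd ε)) ∨
    (∃ u : Fin d, ∃ ε : ℤ, (ε = 1 ∨ ε = -1) ∧
      x = SemidirectProduct.inl (Multiplicative.ofAdd (Pi.single u ε))) := by
  have hinv_t : (SemidirectProduct.inr (Multiplicative.ofAdd (1 : ℤ)) : Gamma d)⁻¹
      = SemidirectProduct.inr (Multiplicative.ofAdd (-1 : ℤ)) := by
    rw [← map_inv]
    rfl
  have hinv_a : ∀ u : Fin d,
      (SemidirectProduct.inl (Multiplicative.ofAdd (Pi.single u (1 : ℤ))) : Gamma d)⁻¹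
      = SemidirectProduct.inl (Multiplicative.ofAdd (Pi.single u (-1 : ℤ))) := by
    intro u
    rw [← map_inv]
    congr 1
    rw [← ofAdd_neg]
    congr 1
    rw [← Pi.single_neg]
  rcases h with h | h
  · rcases Set.mem_insert_iff.mp h with h | ⟨u, hu⟩
    · exact Or.inl ⟨1, Or.inl rfl, h⟩
    · exact Or.inr ⟨u, 1, Or.inl rfl, hu.symm⟩
  · rcases Set.mem_insert_iff.mp h with h | ⟨u, hu⟩
    · refine Or.inl ⟨-1, Or.inr rfl, ?_⟩
      have : x = (tGen d)⁻¹ := by rw [← h, inv_inv]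
      rw [this, tGen, hinv_t]
    · refine Or.inr ⟨u, -1, Or.inr rfl, ?_⟩
      have : x = (aGen d u)⁻¹ := by rw [hu, inv_inv]
      rw [this, aGen, hinv_a]

theorem coord_bound (d : ℕ) (l : List (Gamma d))
    (hl : ∀ x ∈ l, x ∈ gens d ∨ x⁻¹ ∈ gens d) (j : Fin d) :
    (Multiplicative.toAdd (l.prod.left) j).natAbs ≤ l.length ^ ((j : ℕ) + 1) := by
  induction l generalizing j with
  | nil => simp
  | cons g t ih =>
      have hg := hl g List.mem_cons_self
      have ht : ∀ x ∈ t, x ∈ gens d ∨ x⁻¹ ∈ gens d :=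
        fun x hx => hl x (List.mem_cons_of_mem _ hx)
      have hih : ∀ j' : Fin d,
          (Multiplicative.toAdd (t.prod.left) j').natAbs ≤ t.length ^ ((j' : ℕ) + 1) :=
        fun j' => ih ht j'
      set L := t.length with hL
      have hlen : (g :: t).length = L + 1 := by simp [hL]
      rw [hlen]
      set y := Multiplicative.toAdd t.prod.left with hy
      have hy' : t.prod.left = Multiplicative.ofAdd y := rfl
      rcases letter_cases d hg with ⟨ε, hε, rfl⟩ | ⟨u, ε, hε, rfl⟩
      · -- a `t^{±1}` letter
        have hleft : ((SemidirectProduct.inr (Multiplicative.ofAdd ε) : Gamma d)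
            * t.prod).left = act d (Multiplicative.ofAdd ε) t.prod.left := by
          rw [SemidirectProduct.mul_left]
          simp
        rw [List.prod_cons, hleft]
        rcases hε with rfl | rfl
        · -- ε = 1 : the automorphism φ⁻¹ acts
          have hact : act d (Multiplicative.ofAdd (1 : ℤ)) = (phiAut d)⁻¹ := by
            rw [act_ofAdd, zpow_one]
          rw [hact, hy', phiAut_inv_apply]
          set z := (((phiUnit d)⁻¹ : (Module.End ℤ (Fin d → ℤ))ˣ)
            : Module.End ℤ (Fin d → ℤ)) y with hzdef
          have main : ∀ n : ℕ, ∀ j : Fin d, (j : ℕ) = n →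
              (z j).natAbs ≤ (L + 1) ^ ((j : ℕ) + 1) := by
            intro n
            induction n with
            | zero =>
                intro j hj
                have hrec := phi_inv_rec d y j
                rw [← hzdef] at hrec
                have hN : shiftMap d z j = 0 := by
                  rw [shiftMap_apply, dif_neg (by omega)]
                have hyj := hih j
                have hmono : L ^ ((j : ℕ) + 1) ≤ (L + 1) ^ ((j : ℕ) + 1) :=
                  Nat.pow_le_pow_left (by omega) _
                omega
            | succ n ihn =>
                intro j hj
                have hrec := phi_inv_rec d y j
                rw [← hzdef] at hrec
                have hN : shiftMap d z j
                    = z ⟨(j : ℕ) - 1, lt_of_le_of_lt (Nat.sub_le _ _) j.isLt⟩ := by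
                  rw [shiftMap_apply, dif_pos (by omega)]
                have hprev := ihn ⟨(j : ℕ) - 1, lt_of_le_of_lt (Nat.sub_le _ _) j.isLt⟩
                  (by simp; omega)
                simp only [Fin.val_mk] at hprev
                have he : (j : ℕ) - 1 + 1 = (j : ℕ) := by omega
                rw [he] at hprev
                have hyj := hih j
                have hpow := pow_aux1 L (j : ℕ)
                omega
          exact main (j : ℕ) j rfl
        · -- ε = -1 : the automorphism φ acts
          have hact : act d (Multiplicative.ofAdd (-1 : ℤ)) = phiAut d := by
            have := act_neg_nat d 1
            simpa using this
          rw [hact, hy', phiAut_apply]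
          have hzj : ((phiUnit d : (Module.End ℤ (Fin d → ℤ))ˣ)
              : Module.End ℤ (Fin d → ℤ)) y j = y j + shiftMap d y j := by
            rw [phiUnit_val]
            simp
          simp only [toAdd_ofAdd]
          rw [hzj]
          have hyj := hih j
          by_cases h1 : 1 ≤ (j : ℕ)
          · have hN : shiftMap d y j
                = y ⟨(j : ℕ) - 1, lt_of_le_of_lt (Nat.sub_le _ _) j.isLt⟩ := by
              rw [shiftMap_apply, dif_pos h1]
            have hprev := hih ⟨(j : ℕ) - 1, lt_of_le_of_lt (Nat.sub_le _ _) j.isLt⟩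
            simp only [Fin.val_mk] at hprev
            have he : (j : ℕ) - 1 + 1 = (j : ℕ) := by omega
            rw [he] at hprev
            have hpow := pow_aux2 L (j : ℕ)
            have hmono : L ^ ((j : ℕ)) ≤ L ^ ((j : ℕ) + 1) ∨ True := Or.inr trivial
            rw [hN]
            omega
          · have hN : shiftMap d y j = 0 := by
              rw [shiftMap_apply, dif_neg h1]
            rw [hN]
            have hmono : L ^ ((j : ℕ) + 1) ≤ (L + 1) ^ ((j : ℕ) + 1) :=
              Nat.pow_le_pow_left (by omega) _
            omega
      · -- an `a_u^{±1}` letter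
        have hleft : ((SemidirectProduct.inl (Multiplicative.ofAdd (Pi.single u ε))
            : Gamma d) * t.prod).left
            = Multiplicative.ofAdd (Pi.single u ε) * t.prod.left := by
          rw [SemidirectProduct.mul_left]
          simp
        rw [List.prod_cons, hleft, hy']
        have : (Multiplicative.ofAdd (Pi.single u ε) * Multiplicative.ofAdd y)
            = Multiplicative.ofAdd (Pi.single u ε + y) := by
          rw [← ofAdd_add]
        rw [this]
        simp only [toAdd_ofAdd, Pi.add_apply]
        have hyj := hih j
        have hsing : ((Pi.single u ε : Fin d → ℤ) j).natAbs ≤ 1 := by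
          by_cases hju : j = u
          · rw [hju, Pi.single_eq_same]
            rcases hε with rfl | rfl <;> simp
          · rw [Pi.single_eq_of_ne hju]
            simp
        have hpow := pow_aux3 L (j : ℕ)
        omega

theorem lower_main (d : ℕ) (i : Fin d) (n : ℕ) :
    n ≤ (wl d (aGen d i ^ n)) ^ ((i : ℕ) + 1) := by
  obtain ⟨l, hgood, hprod, hlen⟩ := wl_spec d (aGen d i ^ n)
  have h := coord_bound d l hgood i
  rw [hprod] at h
  have he : aGen d i ^ n
      = SemidirectProduct.inl (Multiplicative.ofAdd (Pi.single i (n : ℤ))) := by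
    rw [← zpow_natCast, aGen_zpow_s8]
  rw [he] at h
  simp only [SemidirectProduct.left_inl, toAdd_ofAdd, Pi.single_eq_same] at h
  rw [hlen] at h
  omega

end LowerBound

/-- Corollary 3.4: for `i = 1, …, d`, the function `n ↦ d(1, a_i^n)` is Lipschitz equivalent
to `n ↦ n^{1/i}` (here `i : Fin d` is 0-indexed, so the exponent is `1/(i+1)`). -/
theorem distortion_of_cyclic_subgroups (d : ℕ) (hd : 1 ≤ d) (i : Fin d) :
    ∃ C : ℝ, 1 ≤ C ∧ ∀ n : ℕ, 1 ≤ n →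
      (1 / C) * (n : ℝ) ^ (1 / ((i : ℕ) + 1 : ℝ)) ≤ (wl d (aGen d i ^ n) : ℝ) ∧
      (wl d (aGen d i ^ n) : ℝ) ≤ C * (n : ℝ) ^ (1 / ((i : ℕ) + 1 : ℝ)) := by
  obtain ⟨K, hK1, hK⟩ := upper_main d i
  have hKR : (1 : ℝ) ≤ (2 * K : ℕ) := by exact_mod_cast (by omega : 1 ≤ 2 * K)
  refine ⟨((2 * K : ℕ) : ℝ), hKR, ?_⟩
  intro n hn
  set β : ℝ := 1 / ((i : ℕ) + 1 : ℝ) with hβ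
  have hβ0 : 0 ≤ β := by
    rw [hβ]
    positivity
  have hi0 : ((i : ℕ) + 1 : ℝ) ≠ 0 := by positivity
  set W := wl d (aGen d i ^ n) with hW
  -- root extraction helper
  have root_le : ∀ a b : ℕ, a ≤ b ^ ((i : ℕ) + 1) → (a : ℝ) ^ β ≤ (b : ℝ) := by
    intro a b hab
    have h1 : (a : ℝ) ≤ (b : ℝ) ^ (((i : ℕ) + 1 : ℕ)) := by exact_mod_cast hab
    have h2 : ((a : ℝ)) ^ β ≤ ((b : ℝ) ^ (((i : ℕ) + 1 : ℕ))) ^ β :=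
      Real.rpow_le_rpow (by positivity) h1 hβ0
    have h3 : ((b : ℝ) ^ (((i : ℕ) + 1 : ℕ))) ^ β = (b : ℝ) := by
      rw [← Real.rpow_natCast (b : ℝ) ((i : ℕ) + 1), ← Real.rpow_mul (by positivity)]
      push_cast
      rw [hβ, mul_one_div, div_self hi0, Real.rpow_one]
    rwa [h3] at h2
  have root_ge : ∀ a b : ℕ, a ^ ((i : ℕ) + 1) ≤ b → (a : ℝ) ≤ (b : ℝ) ^ β := by
    intro a b hab
    have h1 : (a : ℝ) ^ (((i : ℕ) + 1 : ℕ)) ≤ (b : ℝ) := by exact_mod_cast hab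
    have h2 : ((a : ℝ) ^ (((i : ℕ) + 1 : ℕ))) ^ β ≤ (b : ℝ) ^ β :=
      Real.rpow_le_rpow (by positivity) h1 hβ0
    have h3 : ((a : ℝ) ^ (((i : ℕ) + 1 : ℕ))) ^ β = (a : ℝ) := by
      rw [← Real.rpow_natCast (a : ℝ) ((i : ℕ) + 1), ← Real.rpow_mul (by positivity)]
      push_cast
      rw [hβ, mul_one_div, div_self hi0, Real.rpow_one]
    rwa [h3] at h2
  have hone : (1 : ℝ) ≤ (n : ℝ) ^ β := by
    have h1 : ((1 : ℝ)) ^ β ≤ (n : ℝ) ^ β :=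
      Real.rpow_le_rpow (by norm_num) (by exact_mod_cast hn) hβ0
    rwa [Real.one_rpow] at h1
  constructor
  · -- lower bound
    have hlow := lower_main d i n
    have hroot : (n : ℝ) ^ β ≤ (W : ℝ) := root_le n W hlow
    have hfrac : 1 / ((2 * K : ℕ) : ℝ) ≤ 1 := by
      rw [div_le_one (by positivity)]
      exact hKR
    calc (1 / ((2 * K : ℕ) : ℝ)) * (n : ℝ) ^ β
        ≤ 1 * (n : ℝ) ^ β := by
          apply mul_le_mul_of_nonneg_right hfrac
          positivity
      _ = (n : ℝ) ^ β := one_mul _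
      _ ≤ (W : ℝ) := hroot
  · -- upper bound
    have hex : ∃ m : ℕ, n ≤ m ^ ((i : ℕ) + 1) := ⟨n, Nat.le_self_pow (by omega) n⟩
    set m := Nat.find hex with hm
    have hfind : n ≤ m ^ ((i : ℕ) + 1) := Nat.find_spec hex
    have hm1 : 1 ≤ m := by
      by_contra h
      have hm0 : m = 0 := by omega
      rw [hm0] at hfind
      have hz : (0 : ℕ) ^ ((i : ℕ) + 1) = 0 := Nat.zero_pow (by omega)
      omega
    have hmin : ¬ n ≤ (m - 1) ^ ((i : ℕ) + 1) := Nat.find_min hex (by omega)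
    have hupper : W ≤ K * m := by
      rw [hW]
      have he : aGen d i ^ n
          = SemidirectProduct.inl (Multiplicative.ofAdd (Pi.single i (n : ℤ))) := by
        rw [← zpow_natCast, aGen_zpow_s8]
      rw [he]
      exact hK m hm1 (n : ℤ) (by simpa using hfind)
    have hm1R : ((m - 1 : ℕ) : ℝ) ≤ (n : ℝ) ^ β := root_ge (m - 1) n (by omega)
    have hmR : (m : ℝ) ≤ (n : ℝ) ^ β + 1 := by
      have hcast : ((m : ℕ) : ℝ) = ((m - 1 : ℕ) : ℝ) + 1 := by
        have : (m : ℕ) = (m - 1) + 1 := by omega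
        rw [this]
        push_cast
        ring
      rw [hcast]
      linarith
    have hm2R : (m : ℝ) ≤ 2 * (n : ℝ) ^ β := by linarith
    calc (W : ℝ) ≤ (K : ℝ) * (m : ℝ) := by exact_mod_cast hupper
      _ ≤ (K : ℝ) * (2 * (n : ℝ) ^ β) := by
          apply mul_le_mul_of_nonneg_left hm2R
          positivity
      _ = ((2 * K : ℕ) : ℝ) * (n : ℝ) ^ β := by
          push_cast
          ring

end ModelFiliform
end
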